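/- arXiv:math/0008163 — 2 statements merged into one kernel-verified Lean document; each statement's English description precedes it below -/
import Mathlib

section
/- Adding a cell to the right of a ribbon: let λ = (λ_1, …, λ_ℓ) be a partition with ℓ ≥ 1 and let μ := (λ_1 + 1, λ_2, …, λ_ℓ) (so that R(μ) is the ribbon of size k+1 obtained from R(λ), of size k = λ_1 + ℓ − 1, by adjoining one cell at the right end, with the same descent set D(μ) = D(λ)). Then S^{R(λ)} ∘ S̃_1 = S^{R(μ)}. (Eq. (26).) -/
open MvPolynomial

noncomputable section

/-- The base field `F = ℚ(q)`. -/
abbrev F : Type := RatFunc ℚ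

/-- The parameter `q`. -/
def q : F := RatFunc.X

/-- The ring of symmetric functions `Λ = F[p₁, p₂, …]`, realized as the polynomial
ring in the power sums; the variable `X n` represents the power sum `p_{n+1}`. -/
abbrev SymF : Type := MvPolynomial ℕ F

/-- The complete homogeneous symmetric function `h_n`, defined via Newton's identity
`(n+1) h_{n+1} = ∑_{k=1}^{n+1} p_k h_{n+1-k}`, which is equivalent to the
generating-function definition `∑ h_n t^n = exp (∑ p_k t^k / k)`. -/
def hN : ℕ → SymF
  | 0 => 1
  | (n+1) => ((n+1 : F))⁻¹ • ∑ i ∈ Finset.range (n+1), X i * hN (n - i)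
decreasing_by exact Nat.lt_succ_of_le (Nat.sub_le n i)

/-- The elementary symmetric function `e_n`, via
`(n+1) e_{n+1} = ∑_{k=1}^{n+1} (-1)^{k-1} p_k e_{n+1-k}`, equivalent to
`∑ e_n t^n = exp (∑ (-1)^{k-1} p_k t^k / k)`. -/
def eN : ℕ → SymF
  | 0 => 1
  | (n+1) => ((n+1 : F))⁻¹ • ∑ i ∈ Finset.range (n+1), ((-1:F))^i • (X i * eN (n - i))
decreasing_by exact Nat.lt_succ_of_le (Nat.sub_le n i)

/-- `h_m` for `m : ℤ`, with `h_m = 0` for `m < 0`. -/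
def hInt (m : ℤ) : SymF := if 0 ≤ m then hN m.toNat else 0

/-- `e_m` for `m : ℤ`, with `e_m = 0` for `m < 0`. -/
def eInt (m : ℤ) : SymF := if 0 ≤ m then eN m.toNat else 0

/-- The weighted degree of a monomial in the power sums (`p_{n+1}` has degree `n+1`). -/
def wt (d : ℕ →₀ ℕ) : ℕ := d.sum (fun n m => (n + 1) * m)

/-- The operator `p_{λ}^⊥` for a power-sum monomial with exponent vector `d`:
the composition of the derivations `(k ∂/∂p_k)^{d_k}`. -/
def monPerp (d : ℕ →₀ ℕ) : Module.End F SymF :=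
  ((d.support.sort (· ≤ ·)).map
    (fun n : ℕ => ((((n : ℕ) + 1 : ℕ) : F) • ((pderiv n : Derivation F SymF SymF) : SymF →ₗ[F] SymF)) ^ (d n))).prod

/-- The skewing operator `f^⊥`: writing `f` as a polynomial in the `p_k` and replacing
each `p_k` by the derivation `k·∂/∂p_k`.  This is the adjoint of multiplication by `f`
with respect to the Hall inner product. -/
def perp (f : SymF) : Module.End F SymF :=
  ∑ d ∈ f.support, f.coeff d • monPerp d

/-- The monomial `p^d` in `Λ`. -/
def mono (d : ℕ →₀ ℕ) : SymF := monomial d (1 : F)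

/-- Builds the linear operator on `Λ` with prescribed values on the monomial basis. -/
def mkOp (val : (ℕ →₀ ℕ) → SymF) : Module.End F SymF :=
  (basisMonomials ℕ F).constr F val

/-- The Bernstein operator `S_m = ∑_{j ≥ 0} (-1)^j h_{m+j} e_j^⊥` (the sum applied to a
monomial of weighted degree `w` has no nonzero terms beyond `j = w`, since `e_j^⊥`
lowers degree by `j`). -/
def bern (m : ℤ) : Module.End F SymF :=
  mkOp fun d => ∑ j ∈ Finset.range (wt d + 1),
    ((-1 : F))^j • (hInt (m + j) * perp (eInt j) (mono d))

/-- The conjugate Bernstein operator `S̃_m = ∑_{j ≥ 0} (-1)^j e_{m+j} h_j^⊥`. -/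
def bernT (m : ℤ) : Module.End F SymF :=
  mkOp fun d => ∑ j ∈ Finset.range (wt d + 1),
    ((-1 : F))^j • (eInt (m + j) * perp (hInt j) (mono d))

/-- The Jing operator `H_m^q = ∑_{i,j ≥ 0} (-1)^i q^j h_{m+i+j} e_i^⊥ h_j^⊥`. -/
def jing (m : ℤ) : Module.End F SymF :=
  mkOp fun d => ∑ i ∈ Finset.range (wt d + 1), ∑ j ∈ Finset.range (wt d + 1),
    (((-1 : F))^i * q^j) • (hInt (m + i + j) * perp (eInt i) (perp (hInt j) (mono d)))

/-- The Schur function of an integer sequence, via the Jacobi–Trudi determinant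
`s_{(p_1,…,p_k)} = det (h_{p_i - i + j})`. -/
def schurSeq {k : ℕ} (p : Fin k → ℤ) : SymF :=
  (Matrix.of (fun i j : Fin k => hInt (p i - (i : ℤ) + (j : ℤ)))).det

/-- The Schur function of a list of natural numbers. -/
def schur (L : List ℕ) : SymF := schurSeq (fun i : Fin L.length => ((L.get i : ℕ) : ℤ))

/-- A partition, as a weakly decreasing list of positive integers. -/
def IsPartition (L : List ℕ) : Prop := L.Pairwise (· ≥ ·) ∧ ∀ x ∈ L, 0 < x

/-- The conjugate partition: `λ'_i` is the number of parts of `λ` of size `≥ i`. -/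
def conj (L : List ℕ) : List ℕ :=
  (List.range L.headI).map (fun i => (L.filter (fun x => i + 1 ≤ x)).length)

/-- `λ^{rc} = (λ₂ - 1, λ₃ - 1, …, λ_ℓ - 1)` (discarding zero parts): the partition `λ`
with its first row and column removed. -/
def rc (L : List ℕ) : List ℕ := (L.tail.map (fun x => x - 1)).filter (fun x => 0 < x)

/-- The partition of `n` `P` as a weakly decreasing list. -/
def partList {n : ℕ} (P : n.Partition) : List ℕ := (P.parts.sort (· ≤ ·)).reverse

/-- The ribbon operator `S^{R(λ)} = s_{λ^{rc}}^⊥ ∘ S̃_{λ'_1} ∘ ⋯ ∘ S̃_{λ'_{λ_1}}`. -/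
def ribbonOp (L : List ℕ) : Module.End F SymF :=
  perp (schur (rc L)) * ((conj L).map (fun c => bernT (c : ℤ))).prod

/-- The size `λ₁ + ℓ(λ) - 1` of the ribbon `λ/λ^{rc}`. -/
def ribbonSize (L : List ℕ) : ℕ := L.headI + L.length - 1

/-- The descent set `D(λ) = {λ_i + ℓ(λ) - i : 2 ≤ i ≤ ℓ(λ)}` of the ribbon `λ/λ^{rc}`. -/
def descents (L : List ℕ) : Finset ℕ :=
  (Finset.Icc 2 L.length).image (fun i => L.getD (i - 1) 0 + L.length - i)

/-- `maj` of the ribbon `λ/λ^{rc}`. -/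
def maj (L : List ℕ) : ℕ := ∑ d ∈ descents L, d

/-- `comaj = k(k-1)/2 - maj` for a ribbon of size `k`. -/
def comaj (k : ℕ) (L : List ℕ) : ℕ := k * (k - 1) / 2 - maj L

/-- The column-adding operator `H_{1^k}^q = ∑_{R ⊨ k} q^{comaj(R)} S^R`, the sum over
all partitions `λ` with `λ₁ + ℓ(λ) - 1 = k` (all of which satisfy `|λ| ≤ k²`). -/
def Hcol (k : ℕ) : Module.End F SymF :=
  ∑ n ∈ Finset.range (k * k + 1), ∑ P : n.Partition,
    if ribbonSize (partList P) = k then q ^ (comaj k (partList P)) • ribbonOp (partList P)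
    else 0

/-- The hat involution: `V̂(P) = ∑_λ (-1)^{|λ|} V(s_{λ'}) · (s_λ^⊥ P)` (on a monomial of
weighted degree `w`, only partitions with `|λ| ≤ w` contribute). -/
def hat (V : Module.End F SymF) : Module.End F SymF :=
  mkOp fun d => ∑ n ∈ Finset.range (wt d + 1), ∑ P : n.Partition,
    ((-1 : F))^n • (V (schur (conj (partList P))) * perp (schur (partList P)) (mono d))

/-- The Hall–Littlewood symmetric function `H_λ[X;q] = H_{λ₁}^q ⋯ H_{λ_ℓ}^q (1)`. -/
def HL (L : List ℕ) : SymF := ((L.map (fun a => jing (a : ℤ))).prod) 1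

/-- The involution `ω` with `ω(p_k) = (-1)^{k-1} p_k`. -/
def omegaOp : Module.End F SymF :=
  (aeval (fun n : ℕ => ((-1 : F))^n • (X n : SymF))).toLinearMap

end

theorem conj_cons_succ {h : ℕ} {t : List ℕ} (ht : ∀ x ∈ t, x ≤ h) :
    conj ((h + 1) :: t) = conj (h :: t) ++ [1] := by
  simp only [conj, List.headI, List.range_succ, List.map_append, List.map_singleton]
  congr 1
  · refine List.map_congr_left fun i hi => ?_
    have hih : i < h := List.mem_range.mp hi
    simp [hih, hih.le]
  · simpa [List.filter_cons] using ht

theorem ribbonOp_cons_succ {h : ℕ} {t : List ℕ} (ht : ∀ x ∈ t, x ≤ h) :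
    ribbonOp ((h + 1) :: t) = ribbonOp (h :: t) * bernT 1 := by
  simp [ribbonOp, rc, conj_cons_succ ht, mul_assoc]

/-- Eq. (26): for a partition `λ = (λ₁, …, λ_ℓ)` with `ℓ ≥ 1` and `μ = (λ₁+1, λ₂, …, λ_ℓ)`,
`S^{R(λ)} ∘ S̃₁ = S^{R(μ)}` (the ribbon with one cell adjoined at the right end). -/
theorem ribbon_add_right (L : List ℕ) (hL : IsPartition L) (hne : L ≠ []) :
    ribbonOp L * bernT 1 = ribbonOp ((L.headI + 1) :: L.tail) := by
  obtain ⟨h, t, rfl⟩ := List.exists_cons_of_ne_nil hne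
  exact (ribbonOp_cons_succ fun x hx => (List.pairwise_cons.mp hL.1).1 x hx).symm
end

section
/- k-level equality is preserved by conjugated hats: let U and V be F-linear operators on Λ and k ≥ 0 an integer such that U(s_λ) = V(s_λ) for every partition λ with ℓ(λ) ≤ k. Then (ω ∘ Û ∘ ω)(s_γ) = (ω ∘ V̂ ∘ ω)(s_γ) for every partition γ with ℓ(γ) ≤ k. (Lemma 8.) -/
open MvPolynomial

/-
Since `ω s_γ = det (e_{γ_i - i + j})` is homogeneous of degree `|γ|`, the series
`Û (ω s_γ) = ∑_λ (-1)^{|λ|} U(s_{λ'}) · s_λ^⊥ (ω s_γ)` is a finite sum over `|λ| ≤ |γ|`. The terms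
with `λ₁ ≤ k` involve `U` only at `s_{λ'}` with `ℓ(λ') = λ₁ ≤ k`, where `U` and `V` agree. The other
terms vanish: `s_λ^⊥ (ω s_γ) = ω ((ω s_λ)^⊥ s_γ)`, every term of the Jacobi–Trudi expansion of
`ω s_λ` contains a factor `e_c` with `c ≥ λ₁ > ℓ(γ)`, and `e_c^⊥` annihilates any product of fewer
than `c` complete homogeneous functions, by the coproduct formula
`e_n^⊥ (x y) = ∑_{a+b=n} e_a^⊥ x · e_b^⊥ y` and `e_a^⊥ h_m = 0` for `a ≥ 2`.
-/

open MvPolynomial Finset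

noncomputable section

/-- `z_λ` for the partition `λ` with `d n` parts equal to `n + 1`. -/
def zNorm (d : ℕ →₀ ℕ) : F := d.prod fun n m => ((n + 1 : ℕ) : F) ^ m * m.factorial

lemma zNorm_ne_zero (d : ℕ →₀ ℕ) : zNorm d ≠ 0 :=
  prod_ne_zero_iff.2 fun n _ =>
    mul_ne_zero (pow_ne_zero _ (Nat.cast_ne_zero.2 n.succ_ne_zero))
      (Nat.cast_ne_zero.2 (Nat.factorial_ne_zero _))

lemma zNorm_add_single (d : ℕ →₀ ℕ) (n : ℕ) :
    zNorm (d + Finsupp.single n 1) = ((n + 1 : ℕ) : F) * ((d n + 1 : ℕ) : F) * zNorm d := by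
  have h0 : ∀ i, ((i + 1 : ℕ) : F) ^ 0 * (Nat.factorial 0 : F) = 1 := by simp
  rw [zNorm, zNorm, ← Finsupp.mul_prod_erase' _ n _ h0, ← Finsupp.mul_prod_erase' d n _ h0,
    Finsupp.erase_add, Finsupp.erase_single, add_zero, Finsupp.add_apply,
    Finsupp.single_eq_same, pow_succ, Nat.factorial_succ]
  push_cast
  ring

lemma monomial_eq_smul_mono (d : ℕ →₀ ℕ) (c : F) : monomial d c = c • mono d := by
  rw [mono, smul_monomial, smul_eq_mul, mul_one]

lemma coe_basisMonomials_eq_mono : ⇑(basisMonomials ℕ F) = mono := by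
  rw [coe_basisMonomials]
  rfl

lemma mkOp_mono (val : (ℕ →₀ ℕ) → SymF) (d : ℕ →₀ ℕ) : mkOp val (mono d) = val d := by
  rw [mkOp, ← coe_basisMonomials_eq_mono, Module.Basis.constr_basis]

/-- The Hall inner product: `⟨p^d, y⟩ = z_d · [p^d] y`. -/
def hall : SymF →ₗ[F] SymF →ₗ[F] F :=
  (basisMonomials ℕ F).constr F fun d => zNorm d • lcoeff F d

lemma hall_monomial (d : ℕ →₀ ℕ) (c : F) (y : SymF) :
    hall (monomial d c) y = c * zNorm d * coeff d y := by
  rw [monomial_eq_smul_mono, map_smul, hall, ← coe_basisMonomials_eq_mono,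
    Module.Basis.constr_basis, LinearMap.smul_apply, LinearMap.smul_apply,
    lcoeff_apply, smul_eq_mul, smul_eq_mul, mul_assoc]

lemma eq_of_hall_eq {x y : SymF} (h : ∀ d, hall (mono d) x = hall (mono d) y) : x = y := by
  ext d
  have hd := h d
  rw [mono, hall_monomial, hall_monomial, one_mul] at hd
  exact mul_left_cancel₀ (zNorm_ne_zero d) hd

/-- `p_{n+1}^⊥ = (n + 1) ∂/∂p_{n+1}`. -/
def pPerp (n : ℕ) : Module.End F SymF :=
  ((n + 1 : ℕ) : F) • ((pderiv n : Derivation F SymF SymF) : SymF →ₗ[F] SymF)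

lemma monPerp_eq (d : ℕ →₀ ℕ) :
    monPerp d = ((d.support.sort (· ≤ ·)).map fun n => pPerp n ^ d n).prod := rfl

lemma pPerp_apply (n : ℕ) (y : SymF) : pPerp n y = ((n + 1 : ℕ) : F) • pderiv n y := rfl

lemma pPerp_mul (n : ℕ) (x y : SymF) : pPerp n (x * y) = pPerp n x * y + x * pPerp n y := by
  rw [pPerp_apply, pPerp_apply, pPerp_apply, Derivation.leibniz, smul_add, smul_eq_mul,
    smul_eq_mul, smul_mul_assoc, mul_smul_comm, add_comm, mul_comm y]

lemma hall_X_mul (n : ℕ) (x y : SymF) : hall (X n * x) y = hall x (pPerp n y) := by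
  classical
  induction x using MvPolynomial.induction_on' with
  | add x₁ x₂ h₁ h₂ =>
    rw [mul_add, map_add, map_add, LinearMap.add_apply, LinearMap.add_apply, h₁, h₂]
  | monomial a c =>
    induction y using MvPolynomial.induction_on' with
    | add y₁ y₂ h₁ h₂ => rw [map_add, map_add, map_add, h₁, h₂]
    | monomial b e =>
      rw [X, monomial_mul, one_mul, hall_monomial, hall_monomial, pPerp_apply, pderiv_monomial,
        coeff_smul, coeff_monomial, coeff_monomial, smul_eq_mul]
      by_cases hb : b = Finsupp.single n 1 + a
      · subst hb
        rw [if_pos rfl, add_tsub_cancel_left, if_pos rfl, add_comm, zNorm_add_single,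
          Finsupp.add_apply, Finsupp.single_eq_same]
        push_cast
        ring
      · rw [if_neg hb]
        by_cases hbn : b n = 0
        · simp [hbn]
        · have hsub : b - Finsupp.single n 1 ≠ a := by
            rintro rfl
            refine hb (Finsupp.ext fun i => ?_)
            simp only [Finsupp.add_apply, Finsupp.tsub_apply, Finsupp.single_apply]
            split_ifs with hi
            · subst hi; omega
            · omega
          rw [if_neg hsub]
          ring

lemma hall_X_pow_mul (n m : ℕ) (x y : SymF) :
    hall ((X n : SymF) ^ m * x) y = hall x ((pPerp n ^ m) y) := by
  induction m generalizing x with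
  | zero => simp
  | succ m ih => rw [pow_succ, mul_assoc, ih, hall_X_mul, pow_succ', Module.End.mul_apply]

lemma hall_prod_X_pow_mul (l : List ℕ) (d : ℕ →₀ ℕ) (x y : SymF) :
    hall ((l.map fun n => (X n : SymF) ^ d n).prod * x) y
      = hall x ((l.map fun n => pPerp n ^ d n).prod y) := by
  induction l generalizing x with
  | nil => simp
  | cons n l ih =>
    rw [List.map_cons, List.prod_cons, List.map_cons, List.prod_cons, mul_comm (X n ^ d n),
      mul_assoc, ih, hall_X_pow_mul, Module.End.mul_apply]

lemma hall_mul_left (f x y : SymF) : hall (f * x) y = hall x (perp f y) := by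
  have hmono : ∀ d x, hall (mono d * x) y = hall x (monPerp d y) := by
    intro d x
    have h : mono d = ((d.support.sort (· ≤ ·)).map fun n => (X n : SymF) ^ d n).prod := by
      rw [mono, monomial_eq, C_1, one_mul, Finsupp.prod, ← prod_map_toList,
        (List.Perm.map _ (sort_perm_toList _ _)).prod_eq]
    rw [h, hall_prod_X_pow_mul, monPerp_eq]
  conv_lhs => rw [f.as_sum]
  simp only [sum_mul, map_sum, LinearMap.sum_apply, perp, LinearMap.smul_apply]
  refine sum_congr rfl fun d _ => ?_
  rw [monomial_eq_smul_mono, smul_mul_assoc, map_smul, LinearMap.smul_apply, map_smul, hmono]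

lemma hall_mono_perp (d : ℕ →₀ ℕ) (f y : SymF) :
    hall (mono d) (perp f y) = hall (f * mono d) y :=
  (hall_mul_left f (mono d) y).symm

lemma perp_mul (f g y : SymF) : perp (f * g) y = perp g (perp f y) :=
  eq_of_hall_eq fun d => by
    rw [hall_mono_perp, hall_mono_perp, mul_assoc, hall_mul_left, hall_mul_left]

lemma perp_smul (c : F) (f y : SymF) : perp (c • f) y = c • perp f y :=
  eq_of_hall_eq fun d => by
    rw [hall_mono_perp, smul_mul_assoc, map_smul, LinearMap.smul_apply, map_smul, hall_mono_perp]

lemma perp_sum {ι : Type*} (s : Finset ι) (f : ι → SymF) (y : SymF) :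
    perp (∑ i ∈ s, f i) y = ∑ i ∈ s, perp (f i) y :=
  eq_of_hall_eq fun d => by
    simp only [hall_mono_perp, sum_mul, map_sum, LinearMap.sum_apply]

lemma perp_one (y : SymF) : perp 1 y = y :=
  eq_of_hall_eq fun d => by rw [hall_mono_perp, one_mul]

lemma perp_X (n : ℕ) (y : SymF) : perp (X n) y = pPerp n y :=
  eq_of_hall_eq fun d => by rw [hall_mono_perp, hall_X_mul]

def omegaAlg : SymF →ₐ[F] SymF := aeval fun n => (-1 : F) ^ n • X n

lemma omegaOp_apply (x : SymF) : omegaOp x = omegaAlg x := rfl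

lemma omegaAlg_X (n : ℕ) : omegaAlg (X n) = (-1 : F) ^ n • X n := aeval_X _ n

/-- The eigenvalue of `ω` on `p^d`. -/
def omegaSign (d : ℕ →₀ ℕ) : F := d.prod fun n m => (-1 : F) ^ (n * m)

lemma omegaSign_mul_self (d : ℕ →₀ ℕ) : omegaSign d * omegaSign d = 1 := by
  rw [omegaSign, ← Finsupp.prod_mul]
  refine prod_eq_one fun n _ => ?_
  dsimp only
  rw [← mul_pow, neg_one_mul, neg_neg, one_pow]

lemma omegaAlg_monomial (d : ℕ →₀ ℕ) (c : F) :
    omegaAlg (monomial d c) = monomial d (omegaSign d * c) := by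
  rw [omegaAlg, aeval_monomial, monomial_eq, omegaSign, mul_comm _ c, map_mul, algebraMap_eq,
    mul_assoc, Finsupp.prod, Finsupp.prod, Finsupp.prod, map_prod, ← prod_mul_distrib]
  congr 1
  refine prod_congr rfl fun n _ => ?_
  rw [smul_pow, ← pow_mul, smul_eq_C_mul]

lemma coeff_omegaAlg (d : ℕ →₀ ℕ) (x : SymF) : coeff d (omegaAlg x) = omegaSign d * coeff d x := by
  classical
  induction x using MvPolynomial.induction_on' with
  | add x₁ x₂ h₁ h₂ => rw [map_add, coeff_add, coeff_add, h₁, h₂, mul_add]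
  | monomial a c =>
    rw [omegaAlg_monomial, coeff_monomial, coeff_monomial]
    split_ifs with h
    · rw [h]
    · rw [mul_zero]

lemma omegaAlg_omegaAlg (x : SymF) : omegaAlg (omegaAlg x) = x := by
  ext d
  rw [coeff_omegaAlg, coeff_omegaAlg, ← mul_assoc, omegaSign_mul_self, one_mul]

lemma hall_omegaAlg (x y : SymF) : hall (omegaAlg x) (omegaAlg y) = hall x y := by
  induction x using MvPolynomial.induction_on' with
  | add x₁ x₂ h₁ h₂ => rw [map_add, map_add, map_add, LinearMap.add_apply, LinearMap.add_apply,
      h₁, h₂]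
  | monomial d c =>
    rw [omegaAlg_monomial, hall_monomial, hall_monomial, coeff_omegaAlg]
    linear_combination (c * zNorm d * coeff d y) * omegaSign_mul_self d

lemma hall_omegaAlg_right (x y : SymF) : hall x (omegaAlg y) = hall (omegaAlg x) y := by
  rw [← hall_omegaAlg, omegaAlg_omegaAlg]

lemma perp_omegaAlg (f y : SymF) : perp f (omegaAlg y) = omegaAlg (perp (omegaAlg f) y) :=
  eq_of_hall_eq fun d => by
    rw [hall_mono_perp, hall_omegaAlg_right, map_mul, hall_mul_left, hall_omegaAlg_right (mono d)]

lemma MvPolynomial.IsWeightedHomogeneous.omegaAlg {M : Type*} [AddCommMonoid M] {w : ℕ → M}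
    {φ : SymF} {m : M} (h : IsWeightedHomogeneous w φ m) :
    IsWeightedHomogeneous w (omegaAlg φ) m := fun d hd =>
  h (right_ne_zero_of_mul (coeff_omegaAlg d φ ▸ hd))

lemma omegaAlg_hN (n : ℕ) : omegaAlg (hN n) = eN n := by
  induction n using Nat.strong_induction_on with
  | _ n ih =>
    rcases n with _ | m
    · rw [hN, eN, map_one]
    · rw [hN, eN, map_smul, map_sum]
      congr 1
      refine sum_congr rfl fun i hi => ?_
      rw [map_mul, omegaAlg_X, ih _ (by omega), smul_mul_assoc]

lemma omegaAlg_hInt (m : ℤ) : omegaAlg (hInt m) = eInt m := by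
  rw [hInt, eInt]
  split_ifs
  · exact omegaAlg_hN _
  · exact map_zero _

lemma omegaAlg_schurSeq {k : ℕ} (p : Fin k → ℤ) :
    omegaAlg (schurSeq p) = (Matrix.of fun i j : Fin k => eInt (p i - i + j)).det := by
  rw [schurSeq, AlgHom.map_det]
  congr 1
  ext i j : 1
  exact omegaAlg_hInt _

lemma hInt_natCast (n : ℕ) : hInt n = hN n := by
  rw [hInt, if_pos (Int.natCast_nonneg n), Int.toNat_natCast]

lemma hInt_of_neg {m : ℤ} (hm : m < 0) : hInt m = 0 := by
  rw [hInt, if_neg (by omega)]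

lemma natCast_smul_hN_succ (n : ℕ) :
    ((n + 1 : ℕ) : F) • hN (n + 1) = ∑ i ∈ range (n + 1), X i * hN (n - i) := by
  rw [hN, smul_smul, Nat.cast_succ, mul_inv_cancel₀ (Nat.cast_add_one_ne_zero n), one_smul]

lemma sum_range_X_mul_hInt (n : ℕ) {c : ℤ} (hc : c ≤ n) :
    ∑ i ∈ range n, X i * hInt (c - 1 - i) = (c : F) • hInt c := by
  obtain ⟨t, rfl⟩ | hc0 : (∃ t : ℕ, c = t + 1) ∨ c ≤ 0 := by
    rcases lt_or_ge 0 c with h | h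
    · exact Or.inl ⟨(c - 1).toNat, by omega⟩
    · exact Or.inr h
  · rw [← sum_range_add_sum_Ico _ (show t + 1 ≤ n by omega),
      sum_eq_zero (s := Ico _ _) fun i hi => by
        rw [hInt_of_neg (by simp only [mem_Ico] at hi; omega), mul_zero],
      add_zero, show ((t : ℤ) + 1 : ℤ) = ((t + 1 : ℕ) : ℤ) by push_cast; ring, hInt_natCast,
      Int.cast_natCast, natCast_smul_hN_succ]
    refine sum_congr rfl fun i hi => ?_
    rw [show ((t + 1 : ℕ) : ℤ) - 1 - i = ((t - i : ℕ) : ℤ) by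
      simp only [mem_range] at hi; omega, hInt_natCast]
  · rw [sum_eq_zero fun i _ => by rw [hInt_of_neg (by omega), mul_zero]]
    rcases hc0.lt_or_eq with h | rfl
    · rw [hInt_of_neg h, smul_zero]
    · rw [Int.cast_zero, zero_smul]

lemma pPerp_X (i j : ℕ) : pPerp j (X i) = if i = j then ((j + 1 : ℕ) : F) • 1 else 0 := by
  rw [pPerp_apply, pderiv_X, Pi.single_apply]
  split_ifs <;> simp

lemma pPerp_one (j : ℕ) : pPerp j 1 = 0 := by
  rw [pPerp_apply, Derivation.map_one_eq_zero, smul_zero]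

lemma pPerp_hInt (j : ℕ) (c : ℤ) : pPerp j (hInt c) = hInt (c - j - 1) := by
  rcases lt_or_ge c 0 with hc | hc
  · rw [hInt_of_neg hc, map_zero, hInt_of_neg (by omega)]
  lift c to ℕ using hc
  induction c using Nat.strong_induction_on with
  | _ n ih =>
  rcases n with _ | m
  · rw [Nat.cast_zero, ← Nat.cast_zero, hInt_natCast, hN, pPerp_one, hInt_of_neg (by omega)]
  · -- Differentiating `(m + 1) h_{m+1} = ∑ p_{i+1} h_{m-i}`: the factor `p_{j+1}` contributes
    -- `(j + 1) h_{m-j}`, and the other factors `(m - j) h_{m-j}` by induction and Newton's identity.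
    have hsum : ∑ i ∈ range (m + 1), pPerp j (X i * hN (m - i))
        = ((j + 1 : ℕ) : F) • hInt ((m : ℤ) - j)
          + (((m : ℤ) - j : ℤ) : F) • hInt ((m : ℤ) - j) := by
      simp only [pPerp_mul, sum_add_distrib, pPerp_X, ite_mul, zero_mul, smul_mul_assoc, one_mul]
      congr 1
      · rw [sum_ite_eq']
        split_ifs with hj
        all_goals simp only [mem_range] at hj
        · rw [show (m : ℤ) - j = ((m - j : ℕ) : ℤ) by omega, hInt_natCast]
        · rw [hInt_of_neg (by omega), smul_zero]
      · rw [← sum_range_X_mul_hInt (m + 1) (by omega)]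
        refine sum_congr rfl fun i hi => ?_
        rw [← hInt_natCast, ih _ (by simp only [mem_range] at hi; omega)]
        congr 2
        simp only [mem_range] at hi
        omega
    rw [hInt_natCast, hN, map_smul, map_sum, hsum, ← add_smul, smul_smul,
      show ((m : F) + 1)⁻¹ * (((j + 1 : ℕ) : F) + (((m : ℤ) - j : ℤ) : F)) = 1 by
        push_cast
        rw [add_right_comm, add_sub_cancel, inv_mul_cancel₀ (Nat.cast_add_one_ne_zero m)],
      one_smul]
    congr 1
    push_cast
    ring

lemma sum_antidiagonal_sum_antidiagonal_fst {M : Type*} [AddCommMonoid M] (n : ℕ)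
    (f : ℕ → ℕ → ℕ → M) :
    ∑ p ∈ antidiagonal n, ∑ q ∈ antidiagonal p.1, f q.1 q.2 p.2
      = ∑ p ∈ antidiagonal n, ∑ q ∈ antidiagonal p.2, f p.1 q.1 q.2 := by
  rw [sum_sigma', sum_sigma']
  refine sum_nbij' (fun x => ⟨(x.2.1, x.2.2 + x.1.2), (x.2.2, x.1.2)⟩)
    (fun x => ⟨(x.1.1 + x.2.1, x.2.2), (x.1.1, x.2.1)⟩) ?_ ?_ ?_ ?_ ?_
  all_goals
    rintro ⟨⟨a, b⟩, ⟨c, d⟩⟩ h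
    simp only [mem_sigma, HasAntidiagonal.mem_antidiagonal] at h ⊢
  · simp only [and_true]; omega
  · simp only [and_true]; omega
  · obtain ⟨-, rfl⟩ := h; rfl
  · obtain ⟨-, rfl⟩ := h; rfl

lemma eN_zero : eN 0 = 1 := by
  rw [eN]

lemma eN_one : eN 1 = X 0 := by
  rw [eN, sum_range_one, pow_zero, one_smul, Nat.sub_self, eN]
  simp

lemma perp_eN_succ (n : ℕ) (y : SymF) :
    ((n + 1 : ℕ) : F) • perp (eN (n + 1)) y
      = ∑ p ∈ antidiagonal n, (-1 : F) ^ p.1 • perp (eN p.2) (pPerp p.1 y) := by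
  rw [← perp_smul, eN, smul_smul, Nat.cast_succ, mul_inv_cancel₀ (Nat.cast_add_one_ne_zero n),
    one_smul, perp_sum, Nat.sum_antidiagonal_eq_sum_range_succ_mk]
  refine sum_congr rfl fun i _ => ?_
  rw [perp_smul, perp_mul, perp_X]

lemma perp_eN_succ_one (n : ℕ) : perp (eN (n + 1)) 1 = 0 := by
  have h := perp_eN_succ n 1
  simp only [pPerp_one, map_zero, smul_zero, sum_const_zero] at h
  exact (smul_eq_zero.1 h).resolve_left (Nat.cast_add_one_ne_zero n)

lemma perp_eN_hInt_eq_zero {a : ℕ} (ha : 2 ≤ a) (c : ℤ) : perp (eN a) (hInt c) = 0 := by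
  induction a using Nat.strong_induction_on generalizing c with
  | _ a ih =>
  obtain ⟨s, rfl⟩ : ∃ s, a = s + 2 := ⟨a - 2, by omega⟩
  have h := perp_eN_succ (s + 1) (hInt c)
  rw [Nat.sum_antidiagonal_eq_sum_range_succ_mk, sum_range_succ, sum_range_succ,
    sum_eq_zero fun i hi => by
      dsimp only
      simp only [mem_range] at hi
      rw [pPerp_hInt, ih (s + 1 - i) (by omega) (by omega), smul_zero]] at h
  simp only [Nat.sub_self, show s + 1 - s = 1 by omega, eN_one, eN_zero, perp_one, perp_X,
    pPerp_hInt, pow_succ, mul_neg_one, neg_smul, zero_add, Nat.cast_zero, sub_zero] at h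
  rw [show c - s - 1 - 1 = c - (s + 1 : ℕ) - 1 by push_cast; ring, add_neg_cancel] at h
  exact (smul_eq_zero.1 h).resolve_left (Nat.cast_add_one_ne_zero _)

lemma perp_eN_mul (n : ℕ) (x y : SymF) :
    perp (eN n) (x * y) = ∑ p ∈ antidiagonal n, perp (eN p.1) x * perp (eN p.2) y := by
  induction n using Nat.strong_induction_on generalizing x y with
  | _ n ih =>
  rcases n with _ | m
  · simp [eN_zero, perp_one]
  -- Newton's identity expresses `(m + 1) e_{m+1}^⊥` through the derivations `p_{i+1}^⊥`,
  -- to which Leibniz's rule applies.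
  have half : ∀ x y : SymF,
      ∑ p ∈ antidiagonal m, (-1 : F) ^ p.1 • perp (eN p.2) (pPerp p.1 x * y)
        = ∑ p ∈ antidiagonal (m + 1), (p.1 : F) • (perp (eN p.1) x * perp (eN p.2) y) := by
    intro x y
    calc _ = ∑ p ∈ antidiagonal m, ∑ q ∈ antidiagonal p.2,
          (-1 : F) ^ p.1 • (perp (eN q.1) (pPerp p.1 x) * perp (eN q.2) y) :=
          sum_congr rfl fun p hp => by
            rw [ih p.2 (by have := HasAntidiagonal.mem_antidiagonal.1 hp; omega), smul_sum]
      _ = ∑ p ∈ antidiagonal m, ∑ q ∈ antidiagonal p.1,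
          (-1 : F) ^ q.1 • (perp (eN q.2) (pPerp q.1 x) * perp (eN p.2) y) :=
          (sum_antidiagonal_sum_antidiagonal_fst m fun i j b =>
            (-1 : F) ^ i • (perp (eN j) (pPerp i x) * perp (eN b) y)).symm
      _ = ∑ p ∈ antidiagonal m, ((p.1 + 1 : ℕ) : F) • (perp (eN (p.1 + 1)) x * perp (eN p.2) y) :=
          sum_congr rfl fun p _ => by
            rw [← smul_mul_assoc, perp_eN_succ, sum_mul]
            simp only [smul_mul_assoc]
      _ = _ := by
          rw [Nat.sum_antidiagonal_succ]
          simp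
  refine smul_right_injective SymF (Nat.cast_add_one_ne_zero m : (m : F) + 1 ≠ 0) ?_
  dsimp only
  calc ((m : F) + 1) • perp (eN (m + 1)) (x * y)
      = ∑ p ∈ antidiagonal m, (-1 : F) ^ p.1 • perp (eN p.2) (pPerp p.1 x * y)
        + ∑ p ∈ antidiagonal m, (-1 : F) ^ p.1 • perp (eN p.2) (pPerp p.1 y * x) := by
        rw [← Nat.cast_succ, perp_eN_succ, ← sum_add_distrib]
        refine sum_congr rfl fun p _ => ?_
        rw [pPerp_mul, map_add, smul_add, mul_comm x]
    _ = ∑ p ∈ antidiagonal (m + 1), ((p.1 : F) + p.2) • (perp (eN p.1) x * perp (eN p.2) y) := by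
        rw [half, half]
        nth_rewrite 2 [← Nat.sum_antidiagonal_swap]
        rw [← sum_add_distrib]
        refine sum_congr rfl fun p _ => ?_
        rw [Prod.fst_swap, Prod.snd_swap, mul_comm (perp (eN p.2) y), add_smul]
    _ = ((m : F) + 1) • ∑ p ∈ antidiagonal (m + 1), perp (eN p.1) x * perp (eN p.2) y := by
        rw [smul_sum]
        refine sum_congr rfl fun p hp => ?_
        rw [← Nat.cast_add, HasAntidiagonal.mem_antidiagonal.1 hp, Nat.cast_succ]

lemma perp_eN_mul_eq_zero {x y : SymF} {a b : ℕ} (hx : ∀ j, a < j → perp (eN j) x = 0)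
    (hy : ∀ j, b < j → perp (eN j) y = 0) {n : ℕ} (hn : a + b < n) :
    perp (eN n) (x * y) = 0 := by
  rw [perp_eN_mul]
  refine sum_eq_zero fun p hp => ?_
  have hp := HasAntidiagonal.mem_antidiagonal.1 hp
  rcases lt_or_ge a p.1 with h | h
  · rw [hx _ h, zero_mul]
  · rw [hy _ (by omega), mul_zero]

lemma perp_eN_prod_hInt_eq_zero {m : ℕ} (c : Fin m → ℤ) {n : ℕ} (hn : m < n) :
    perp (eN n) (∏ i, hInt (c i)) = 0 := by
  induction m generalizing n with
  | zero =>
    obtain ⟨n, rfl⟩ : ∃ k, n = k + 1 := ⟨n - 1, by omega⟩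
    rw [univ_eq_empty, prod_empty, perp_eN_succ_one]
  | succ m ih =>
    rw [Fin.prod_univ_succ]
    exact perp_eN_mul_eq_zero (a := 1) (b := m) (fun j hj => perp_eN_hInt_eq_zero hj _)
      (fun j hj => ih _ hj) (by omega)

lemma perp_eInt_schurSeq_eq_zero {m : ℕ} (q : Fin m → ℤ) {c : ℤ} (hc : (m : ℤ) < c) :
    perp (eInt c) (schurSeq q) = 0 := by
  lift c to ℕ using (by omega)
  rw [eInt, if_pos (by omega), Int.toNat_natCast, schurSeq, Matrix.det_apply, map_sum]
  refine sum_eq_zero fun σ _ => ?_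
  simp only [Matrix.of_apply]
  rw [Units.smul_def, map_zsmul, perp_eN_prod_hInt_eq_zero _ (by omega), smul_zero]

/-- In the expansion of `ω s_p = det (e_{p_i - i + j})`, every term has a factor `e_c` from row `i`,
with `c ≥ p_i - i > m`. -/
lemma perp_omegaAlg_schurSeq_eq_zero {k m : ℕ} (p : Fin k → ℤ) (q : Fin m → ℤ) (i : Fin k)
    (h : (m : ℤ) < p i - i) : perp (omegaAlg (schurSeq p)) (schurSeq q) = 0 := by
  rw [omegaAlg_schurSeq, Matrix.det_apply, perp_sum]
  refine sum_eq_zero fun σ _ => ?_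
  rw [Units.smul_def, ← Int.cast_smul_eq_zsmul F, perp_smul,
    ← mul_prod_erase _ _ (mem_univ (σ.symm i)), perp_mul, Matrix.of_apply, σ.apply_symm_apply,
    perp_eInt_schurSeq_eq_zero q (by omega), map_zero, smul_zero]

lemma perp_schur_omegaAlg_schur_eq_zero {L M : List ℕ} (h : M.length < L.headI) :
    perp (schur L) (omegaAlg (schur M)) = 0 := by
  cases L with
  | nil => simp at h
  | cons a L =>
    rw [perp_omegaAlg, schur, schur, perp_omegaAlg_schurSeq_eq_zero _ _ 0 (by simpa using h),
      map_zero]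

/-- The grading of `Λ` in which `p_{n+1}` has degree `n + 1`; it is `ℤ`-valued so that `hInt m` is
homogeneous of degree `m` for every integer `m`. -/
def pDeg (n : ℕ) : ℤ := n + 1

lemma natCast_wt (d : ℕ →₀ ℕ) : (wt d : ℤ) = Finsupp.weight pDeg d := by
  rw [wt, Finsupp.weight_apply, Finsupp.sum, Finsupp.sum, Nat.cast_sum]
  refine sum_congr rfl fun n _ => ?_
  rw [pDeg, nsmul_eq_mul]
  push_cast
  ring

lemma isWeightedHomogeneous_hN (n : ℕ) : IsWeightedHomogeneous pDeg (hN n) n := by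
  induction n using Nat.strong_induction_on with
  | _ n ih =>
  rcases n with _ | m
  · rw [hN]
    exact isWeightedHomogeneous_one F pDeg
  · rw [hN]
    refine Submodule.smul_mem (weightedHomogeneousSubmodule F pDeg _) _
      (IsWeightedHomogeneous.sum _ _ _ fun i hi => ?_)
    convert (isWeightedHomogeneous_X F pDeg i).mul (ih (m - i) (by omega)) using 1
    simp only [mem_range] at hi
    simp only [pDeg]
    omega

lemma isWeightedHomogeneous_hInt (m : ℤ) : IsWeightedHomogeneous pDeg (hInt m) m := by
  rcases lt_or_ge m 0 with hm | hm
  · rw [hInt_of_neg hm]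
    exact isWeightedHomogeneous_zero F pDeg m
  · lift m to ℕ using hm
    rw [hInt_natCast]
    exact isWeightedHomogeneous_hN m

lemma isWeightedHomogeneous_schurSeq {k : ℕ} (p : Fin k → ℤ) :
    IsWeightedHomogeneous pDeg (schurSeq p) (∑ i, p i) := by
  rw [schurSeq, Matrix.det_apply]
  refine IsWeightedHomogeneous.sum _ _ _ fun σ _ => ?_
  rw [Units.smul_def]
  refine Submodule.smul_of_tower_mem (weightedHomogeneousSubmodule F pDeg _) _ ?_
  have hdeg : ∑ i, (p (σ i) - (σ i : ℤ) + i) = ∑ i, p i := by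
    rw [sum_add_distrib, sum_sub_distrib, Equiv.sum_comp σ p,
      Equiv.sum_comp σ (fun i : Fin k => (i : ℤ)), sub_add_cancel]
  exact hdeg ▸ IsWeightedHomogeneous.prod univ _ _ fun i _ => isWeightedHomogeneous_hInt _

lemma isWeightedHomogeneous_schur (L : List ℕ) : IsWeightedHomogeneous pDeg (schur L) L.sum := by
  have h := isWeightedHomogeneous_schurSeq fun i : Fin L.length => (L.get i : ℤ)
  rwa [← Nat.cast_sum, ← List.sum_ofFn, List.ofFn_get] at h

lemma hat_apply_of_isWeightedHomogeneous (V : Module.End F SymF) {x : SymF} {N : ℕ}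
    (hx : IsWeightedHomogeneous pDeg x N) :
    hat V x = ∑ n ∈ range (N + 1), ∑ P : n.Partition,
      (-1 : F) ^ n • (V (schur (conj (partList P))) * perp (schur (partList P)) x) := by
  induction hx using IsWeightedHomogeneous.induction_on with
  | zero => simp
  | add x y _ _ hx hy => simp only [map_add, hx, hy, mul_add, smul_add, sum_add_distrib]
  | monomial d r hd =>
    have hwt : wt d = N := by rw [← Nat.cast_inj (R := ℤ), natCast_wt, hd]
    rw [monomial_eq_smul_mono, map_smul, hat, mkOp_mono, hwt, smul_sum]
    refine sum_congr rfl fun n _ => ?_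
    rw [smul_sum]
    refine sum_congr rfl fun P _ => ?_
    rw [map_smul, mul_smul_comm, smul_comm]

lemma length_conj (L : List ℕ) : (conj L).length = L.headI := by
  simp [conj]

lemma isPartition_conj (L : List ℕ) : IsPartition (conj L) := by
  refine ⟨?_, fun x hx => ?_⟩
  · rw [conj, List.pairwise_map]
    refine List.pairwise_lt_range.imp fun hab => List.Sublist.length_le ?_
    exact List.monotone_filter_right L fun x hx => by simp only [decide_eq_true_eq] at hx ⊢; omega
  · obtain ⟨i, hi, rfl⟩ := List.mem_map.1 hx
    rw [List.mem_range] at hi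
    cases L with
    | nil => simp at hi
    | cons a t =>
      refine List.length_pos_iff.2 (List.ne_nil_of_mem (a := a) ?_)
      simpa [List.mem_filter] using hi

end

/-- Lemma 8: if `U` and `V` agree on all Schur functions indexed by partitions of length
`≤ k`, then so do `ω ∘ Û ∘ ω` and `ω ∘ V̂ ∘ ω`. -/
theorem level_equal_hat (U V : Module.End F SymF) (k : ℕ)
    (h : ∀ L : List ℕ, IsPartition L → L.length ≤ k → U (schur L) = V (schur L)) :
    ∀ G : List ℕ, IsPartition G → G.length ≤ k →
      (omegaOp * hat U * omegaOp) (schur G) = (omegaOp * hat V * omegaOp) (schur G) := by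
  intro G _ hGk
  have hG := (isWeightedHomogeneous_schur G).omegaAlg
  simp only [Module.End.mul_apply, omegaOp_apply]
  rw [hat_apply_of_isWeightedHomogeneous U hG, hat_apply_of_isWeightedHomogeneous V hG]
  refine congrArg omegaAlg (sum_congr rfl fun n _ => sum_congr rfl fun P _ => ?_)
  by_cases hP : (partList P).headI ≤ k
  · rw [h _ (isPartition_conj _) (by rwa [length_conj])]
  · rw [perp_schur_omegaAlg_schur_eq_zero (by omega), mul_zero, mul_zero]
end
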